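/- Let $g_n(z) = L_n z + p_n(z)$ be a sequence of special triangular automorphisms of $\mathbb{C}^d$ where: (a) $(L_n)$ are lower triangular linear automorphisms with $\|L_{n,m}\| \le c\lambda^{n-m}$ for all $n\ge m\ge 0$, with $c>0$ and $0<\lambda<1$; (b) $(p_n)$ is a bounded sequence of strictly triangular polynomial maps with $p_n(0)=0$ and $Dp_n(0)=0$. Then the family of polynomial maps $\{\lambda^{-n} g_{n,0} : n\in\mathbb{N}\}$ is bounded (uniformly bounded degrees and coefficients), where $g_{n,0} = g_{n-1}\circ\cdots\circ g_0$. -/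

import Mathlib

/-!
Measure polynomials by the `ℓ¹` norm of their coefficients, which is submultiplicative.
The orbit `F n = g_{n,0}` satisfies `F (n+1) = L_n F n + p_n ∘ F n`, so by variation of constants
`F n = L_{n,0} z + ∑_{m<n} L_{n,m+1} (p_m ∘ F m)`. Since `p_m^j` only involves the coordinates
below `j`, we induct on the coordinate: if the coordinates below `j` of `F m` have size
`O(λ^m)`, then `p_m^i ∘ F m` (for `i ≤ j`) has size `O(λ^{2m})` because `p_m` has no constant or
linear terms, and the `j`-th row of the formula is `O(∑_{m<n} λ^{n-m-1} λ^{2m}) = O(λ^n)`.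
The same induction on the one-step recursion bounds the degrees.
-/

/-- The operator norm of a `d × d` complex matrix acting on `ℂ^d` with the max-norm. -/
noncomputable def opN {d : ℕ} (M : Matrix (Fin d) (Fin d) ℂ) : ℝ :=
  ‖LinearMap.toContinuousLinearMap (Matrix.mulVecLin M)‖

/-- `Lprod L m ℓ = L_{m+ℓ-1} ⋯ L_m`, i.e. the transition matrix `L_{m+ℓ, m}`. -/
noncomputable def Lprod {d : ℕ} (L : ℕ → Matrix (Fin d) (Fin d) ℂ) (m : ℕ) :
    ℕ → Matrix (Fin d) (Fin d) ℂ
  | 0 => 1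
  | (ℓ + 1) => L (m + ℓ) * Lprod L m ℓ

/-- The polynomial map representing the composition `g_{n,0} = g_{n-1} ∘ ⋯ ∘ g_0`,
where `g_n` is given by the tuple of polynomials `G n`. -/
noncomputable def compSeq {d : ℕ} (G : ℕ → Fin d → MvPolynomial (Fin d) ℂ) :
    ℕ → Fin d → MvPolynomial (Fin d) ℂ
  | 0 => fun j => MvPolynomial.X j
  | (n + 1) => fun j => MvPolynomial.bind₁ (compSeq G n) (G n j)

open MvPolynomial Finset NNReal
open scoped Matrix

namespace MvPolynomial

section CommSemiring

variable {σ τ R : Type*} [CommSemiring R]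

theorem totalDegree_bind₁_le {D E : ℕ} (f : σ → MvPolynomial τ R) (q : MvPolynomial σ R)
    (hq : q.totalDegree ≤ D) (hf : ∀ k ∈ q.vars, (f k).totalDegree ≤ E) :
    (bind₁ f q).totalDegree ≤ D * E := by
  conv_lhs => rw [q.as_sum, map_sum]
  refine (totalDegree_finsetSum _ _).trans (Finset.sup_le fun μ hμ => ?_)
  rw [bind₁_monomial]
  refine (totalDegree_mul _ _).trans ?_
  rw [totalDegree_C, zero_add]
  refine (totalDegree_finsetProd _ _).trans ?_
  calc ∑ k ∈ μ.support, (f k ^ μ k).totalDegree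
      ≤ ∑ k ∈ μ.support, μ k * E := sum_le_sum fun k hk =>
        (totalDegree_pow _ _).trans (Nat.mul_le_mul_left _
          (hf k ((mem_vars_iff_mem_support k).2 ⟨μ, hμ, hk⟩)))
    _ ≤ D * E := by
        rw [← sum_mul]
        exact Nat.mul_le_mul_right _ ((le_totalDegree hμ).trans hq)

theorem totalDegree_map_C_mulVec_apply_le {ι κ : Type*} [Fintype ι] {E : ℕ}
    (M : Matrix κ ι R) (v : ι → MvPolynomial σ R) (j : κ)
    (hv : ∀ i, M j i ≠ 0 → (v i).totalDegree ≤ E) :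
    ((M.map C *ᵥ v) j).totalDegree ≤ E := by
  refine (totalDegree_finsetSum _ _).trans (Finset.sup_le fun i _ => ?_)
  by_cases hi : M j i = 0
  · simp [hi]
  · refine (totalDegree_mul _ _).trans ?_
    simpa using hv i hi

theorem card_support_le_of_totalDegree_le [Fintype σ] {P : MvPolynomial σ R} {D : ℕ}
    (hP : P.totalDegree ≤ D) : #P.support ≤ (D + 1) ^ Fintype.card σ := by
  classical
  have hsub : P.support ⊆ (Fintype.piFinset fun _ : σ => range (D + 1)).map
      Finsupp.equivFunOnFinite.symm.toEmbedding := by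
    intro μ hμ
    simp only [mem_map, Fintype.mem_piFinset, mem_range]
    exact ⟨μ, fun i => Nat.lt_succ_of_le
      ((Finsupp.le_degree i μ).trans ((le_totalDegree hμ).trans hP)), by simp⟩
  simpa using card_le_card hsub

end CommSemiring

section Normed

variable {σ τ R : Type*} [NormedCommRing R]

noncomputable def l1Norm (P : MvPolynomial σ R) : ℝ≥0 :=
  ∑ μ ∈ P.support, ‖P.coeff μ‖₊

theorem l1Norm_eq_sum_of_support_subset {P : MvPolynomial σ R} {S : Finset (σ →₀ ℕ)}
    (h : P.support ⊆ S) : l1Norm P = ∑ μ ∈ S, ‖P.coeff μ‖₊ :=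
  sum_subset h fun μ _ hμ => by simp [notMem_support_iff.mp hμ]

theorem nnnorm_coeff_le_l1Norm (P : MvPolynomial σ R) (μ : σ →₀ ℕ) :
    ‖P.coeff μ‖₊ ≤ l1Norm P := by
  classical
  rw [l1Norm_eq_sum_of_support_subset (subset_insert μ P.support)]
  exact single_le_sum (f := fun μ => ‖P.coeff μ‖₊) (fun _ _ => zero_le) (mem_insert_self μ _)

theorem l1Norm_le_of_totalDegree_le [Fintype σ] {P : MvPolynomial σ R} {D : ℕ} {B : ℝ≥0}
    (hD : P.totalDegree ≤ D) (hB : ∀ μ, ‖P.coeff μ‖₊ ≤ B) :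
    l1Norm P ≤ (D + 1) ^ Fintype.card σ * B := by
  refine (sum_le_card_nsmul _ _ B fun μ _ => hB μ).trans ?_
  rw [nsmul_eq_mul]
  gcongr
  exact_mod_cast card_support_le_of_totalDegree_le hD

@[simp]
theorem l1Norm_zero : l1Norm (0 : MvPolynomial σ R) = 0 := by
  simp [l1Norm]

@[simp]
theorem l1Norm_monomial (s : σ →₀ ℕ) (a : R) : l1Norm (monomial s a) = ‖a‖₊ := by
  classical
  rw [l1Norm_eq_sum_of_support_subset support_monomial_subset]
  simp [coeff_monomial]

@[simp]
theorem l1Norm_C (a : R) : l1Norm (C a : MvPolynomial σ R) = ‖a‖₊ :=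
  l1Norm_monomial 0 a

theorem l1Norm_add_le (P Q : MvPolynomial σ R) : l1Norm (P + Q) ≤ l1Norm P + l1Norm Q := by
  classical
  rw [l1Norm_eq_sum_of_support_subset support_add,
    l1Norm_eq_sum_of_support_subset (subset_union_left (s₂ := Q.support)),
    l1Norm_eq_sum_of_support_subset (subset_union_right (s₁ := P.support)), ← sum_add_distrib]
  exact sum_le_sum fun μ _ => by simpa only [coeff_add] using nnnorm_add_le _ _

theorem l1Norm_sum_le {ι : Type*} (s : Finset ι) (P : ι → MvPolynomial σ R) :
    l1Norm (∑ i ∈ s, P i) ≤ ∑ i ∈ s, l1Norm (P i) :=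
  le_sum_of_subadditive l1Norm l1Norm_zero.le l1Norm_add_le s P

theorem l1Norm_mul_le (P Q : MvPolynomial σ R) : l1Norm (P * Q) ≤ l1Norm P * l1Norm Q := by
  have hPQ : l1Norm P * l1Norm Q =
      ∑ μ ∈ P.support, ∑ ν ∈ Q.support, ‖P.coeff μ‖₊ * ‖Q.coeff ν‖₊ := sum_mul_sum _ _ _ _
  conv_lhs => rw [P.as_sum, Q.as_sum, sum_mul_sum]
  rw [hPQ]
  refine (l1Norm_sum_le _ _).trans (sum_le_sum fun μ _ => ?_)
  refine (l1Norm_sum_le _ _).trans (sum_le_sum fun ν _ => ?_)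
  rw [monomial_mul, l1Norm_monomial]
  exact nnnorm_mul_le _ _

theorem l1Norm_C_mul_le (a : R) (P : MvPolynomial σ R) : l1Norm (C a * P) ≤ ‖a‖₊ * l1Norm P := by
  simpa using l1Norm_mul_le (C a) P

theorem l1Norm_map_C_mulVec_apply_le {ι κ : Type*} [Fintype ι] {B : ℝ≥0}
    (M : Matrix κ ι R) (v : ι → MvPolynomial σ R) (j : κ)
    (hv : ∀ i, M j i ≠ 0 → l1Norm (v i) ≤ B) :
    l1Norm ((M.map C *ᵥ v) j) ≤ (∑ i, ‖M j i‖₊) * B := by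
  refine (l1Norm_sum_le _ _).trans ?_
  rw [sum_mul]
  refine sum_le_sum fun i _ => (l1Norm_C_mul_le _ _).trans ?_
  by_cases hi : M j i = 0
  · simp [hi]
  · exact mul_le_mul_right (hv i hi) _

variable [NormOneClass R]

@[simp]
theorem l1Norm_X (i : σ) : l1Norm (X i : MvPolynomial σ R) = 1 := by
  simp [X]

theorem l1Norm_prod_le {ι : Type*} (s : Finset ι) (P : ι → MvPolynomial σ R) :
    l1Norm (∏ i ∈ s, P i) ≤ ∏ i ∈ s, l1Norm (P i) :=
  le_prod_of_submultiplicative l1Norm (by simpa using (l1Norm_C (σ := σ) (1 : R)).le)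
    l1Norm_mul_le s P

theorem l1Norm_pow_le (P : MvPolynomial σ R) (k : ℕ) : l1Norm (P ^ k) ≤ l1Norm P ^ k := by
  simpa using l1Norm_prod_le (range k) fun _ => P

theorem l1Norm_bind₁_le (f : σ → MvPolynomial τ R) (q : MvPolynomial σ R) {B : ℝ≥0}
    (hf : ∀ k ∈ q.vars, l1Norm (f k) ≤ B) :
    l1Norm (bind₁ f q) ≤ ∑ μ ∈ q.support, ‖q.coeff μ‖₊ * B ^ (μ.sum fun _ e => e) := by
  conv_lhs => rw [q.as_sum, map_sum]
  refine (l1Norm_sum_le _ _).trans (sum_le_sum fun μ hμ => ?_)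
  rw [bind₁_monomial, Finsupp.sum, ← prod_pow_eq_pow_sum]
  refine (l1Norm_C_mul_le _ _).trans (mul_le_mul_right ((l1Norm_prod_le _ _).trans
    (prod_le_prod' fun k hk => (l1Norm_pow_le _ _).trans ?_)) _)
  exact pow_le_pow_left₀ zero_le (hf k ((mem_vars_iff_mem_support k).2 ⟨μ, hμ, hk⟩)) _

theorem l1Norm_bind₁_le_mul_sq {D : ℕ} {K t : ℝ≥0} (hK : 1 ≤ K) (ht : t ≤ 1)
    (f : σ → MvPolynomial τ R) (q : MvPolynomial σ R)
    (hq : ∀ μ ∈ q.support, 2 ≤ μ.sum fun _ e => e) (hqD : q.totalDegree ≤ D)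
    (hf : ∀ k ∈ q.vars, l1Norm (f k) ≤ K * t) :
    l1Norm (bind₁ f q) ≤ l1Norm q * (K ^ D * t ^ 2) := by
  refine (l1Norm_bind₁_le f q hf).trans ?_
  rw [l1Norm, sum_mul]
  refine sum_le_sum fun μ hμ => mul_le_mul_right ?_ _
  rw [mul_pow]
  exact mul_le_mul' (pow_le_pow_right₀ hK ((le_totalDegree hμ).trans hqD))
    (pow_le_pow_of_le_one zero_le ht (hq μ hμ))

end Normed

end MvPolynomial

theorem NNReal.sum_range_pow_sub_succ_mul_sq_le {r : ℝ≥0} (hr0 : r ≠ 0) (hr1 : r < 1) (n : ℕ) :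
    ∑ m ∈ range n, r ^ (n - (m + 1)) * (r ^ m) ^ 2 ≤ r⁻¹ * (1 - r)⁻¹ * r ^ n := by
  have hterm : ∀ m ∈ range n, r ^ (n - (m + 1)) * (r ^ m) ^ 2 = r⁻¹ * r ^ n * r ^ m := by
    intro m hm
    have h : r ^ n * r ^ m = r * (r ^ (n - (m + 1)) * (r ^ m) ^ 2) := by
      rw [← mul_assoc, ← pow_succ', ← pow_mul, ← pow_add, ← pow_add]
      congr 1
      have := mem_range.1 hm
      omega
    rw [mul_assoc, h, inv_mul_cancel_left₀ hr0]
  rw [sum_congr rfl hterm, ← mul_sum]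
  calc r⁻¹ * r ^ n * ∑ m ∈ range n, r ^ m ≤ r⁻¹ * r ^ n * (1 - r)⁻¹ :=
        mul_le_mul_right ((NNReal.summable_geometric hr1).sum_le_tsum _ (fun _ _ => zero_le)
          |>.trans_eq (NNReal.tsum_geometric hr1)) _
    _ = r⁻¹ * (1 - r)⁻¹ * r ^ n := by ring

section Dynamics

open OrderDual

variable {d : ℕ}

theorem sum_norm_apply_le_opN (M : Matrix (Fin d) (Fin d) ℂ) (j : Fin d) :
    ∑ i, ‖M j i‖ ≤ opN M := by
  let _ := Matrix.linftyOpNormedAddCommGroup (m := Fin d) (n := Fin d) (α := ℂ)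
  calc ∑ i, ‖M j i‖ = ((∑ i, ‖M j i‖₊ : ℝ≥0) : ℝ) := by push_cast; rfl
    _ ≤ ((univ.sup fun r => ∑ i, ‖M r i‖₊ : ℝ≥0) : ℝ) :=
        NNReal.coe_le_coe.2 (le_sup (f := fun r => ∑ i, ‖M r i‖₊) (mem_univ j))
    _ = opN M := by rw [← Matrix.linfty_opNorm_def, Matrix.linfty_opNorm_eq_opNorm]; rfl

variable {L : ℕ → Matrix (Fin d) (Fin d) ℂ}

theorem Lprod_succ (m ℓ : ℕ) : Lprod L m (ℓ + 1) = L (m + ℓ) * Lprod L m ℓ := rfl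

theorem mul_Lprod_sub {m n : ℕ} (h : m ≤ n) : L n * Lprod L m (n - m) = Lprod L m (n + 1 - m) := by
  obtain ⟨k, rfl⟩ := Nat.exists_eq_add_of_le h
  rw [show m + k + 1 - m = k + 1 by omega, Nat.add_sub_cancel_left, Lprod_succ]

theorem blockTriangular_Lprod (hL : ∀ n, (L n).BlockTriangular toDual) (m ℓ : ℕ) :
    (Lprod L m ℓ).BlockTriangular toDual := by
  induction ℓ with
  | zero => exact Matrix.blockTriangular_one
  | succ ℓ ih => exact (hL _).mul ih

theorem val_le_of_blockTriangular_toDual {M : Matrix (Fin d) (Fin d) ℂ}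
    (hM : M.BlockTriangular toDual) {i j : Fin d} (h : M j i ≠ 0) : (i : ℕ) ≤ j :=
  Fin.le_def.1 (not_lt.1 fun hji => h (hM (toDual_lt_toDual.2 hji)))

/-- Discrete variation of constants; `Lprod L (m + 1) (n - (m + 1))` is `L_{n,m+1}`. -/
theorem eq_map_Lprod_mulVec_add_sum {A : Type*} [CommSemiring A] (f : ℂ →+* A)
    {x r : ℕ → Fin d → A} (hx : ∀ n, x (n + 1) = (L n).map f *ᵥ x n + r n) (n : ℕ) :
    x n = (Lprod L 0 n).map f *ᵥ x 0 +
      ∑ m ∈ range n, (Lprod L (m + 1) (n - (m + 1))).map f *ᵥ r m := by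
  induction n with
  | zero => simp [Lprod, Matrix.map_one]
  | succ n ih =>
    have hlast : (Lprod L (n + 1) 0).map f *ᵥ r n = r n := by simp [Lprod, Matrix.map_one]
    rw [hx, ih, Matrix.mulVec_add, Matrix.mulVec_sum, Matrix.mulVec_mulVec, ← Matrix.map_mul,
      sum_range_succ, Nat.sub_self, hlast, Lprod_succ, zero_add, add_assoc]
    congr 2
    refine sum_congr rfl fun m hm => ?_
    rw [Matrix.mulVec_mulVec, ← Matrix.map_mul, mul_Lprod_sub (mem_range.1 hm)]

variable {p : ℕ → Fin d → MvPolynomial (Fin d) ℂ}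

variable (L p) in
/-- The composition `g_{n,0}` of the maps `g_n = L_n + p_n`. -/
noncomputable def linearAddComp : ℕ → Fin d → MvPolynomial (Fin d) ℂ :=
  compSeq fun n j => (∑ i, C (L n j i) * X i) + p n j

theorem linearAddComp_zero : linearAddComp L p 0 = X := rfl

theorem linearAddComp_succ (n : ℕ) :
    linearAddComp L p (n + 1) =
      (L n).map C *ᵥ linearAddComp L p n + fun j => bind₁ (linearAddComp L p n) (p n j) := by
  funext j
  simp [linearAddComp, compSeq, Matrix.mulVec, dotProduct]

theorem totalDegree_linearAddComp_le_of_forall_lt (hL : ∀ n, (L n).BlockTriangular toDual)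
    (hpvars : ∀ n j, ∀ k ∈ (p n j).vars, k < j) {D E J : ℕ}
    (hpD : ∀ n j, (p n j).totalDegree ≤ D)
    (hE : ∀ n (k : Fin d), (k : ℕ) < J → (linearAddComp L p n k).totalDegree ≤ E)
    (n : ℕ) (j : Fin d) (hj : (j : ℕ) ≤ J) :
    (linearAddComp L p n j).totalDegree ≤ max 1 (D * E) := by
  induction n generalizing j with
  | zero => simp [linearAddComp_zero]
  | succ n ih =>
    rw [linearAddComp_succ, Pi.add_apply]
    refine (totalDegree_add _ _).trans (max_le ?_ ?_)
    · exact totalDegree_map_C_mulVec_apply_le _ _ _ fun i hi =>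
        ih i ((val_le_of_blockTriangular_toDual (hL n) hi).trans hj)
    · refine (totalDegree_bind₁_le _ _ (hpD n j) fun k hk => hE n k ?_).trans (le_max_right _ _)
      exact (Fin.lt_def.1 (hpvars n j k hk)).trans_le hj

theorem exists_totalDegree_linearAddComp_le (hL : ∀ n, (L n).BlockTriangular toDual)
    (hpvars : ∀ n j, ∀ k ∈ (p n j).vars, k < j) {D : ℕ}
    (hpD : ∀ n j, (p n j).totalDegree ≤ D) :
    ∃ E, ∀ n j, (linearAddComp L p n j).totalDegree ≤ E := by
  have key : ∀ J, ∃ E, ∀ n (k : Fin d), (k : ℕ) < J → (linearAddComp L p n k).totalDegree ≤ E := by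
    intro J
    induction J with
    | zero => exact ⟨0, fun _ _ h => absurd h (Nat.not_lt_zero _)⟩
    | succ J ih =>
      obtain ⟨E, hE⟩ := ih
      exact ⟨_, fun n k hk => totalDegree_linearAddComp_le_of_forall_lt hL hpvars hpD hE n k
        (Nat.lt_succ_iff.1 hk)⟩
  obtain ⟨E, hE⟩ := key d
  exact ⟨E, fun n j => hE n j j.isLt⟩

theorem l1Norm_linearAddComp_le_of_forall_lt (hL : ∀ n, (L n).BlockTriangular toDual)
    (hpvars : ∀ n j, ∀ k ∈ (p n j).vars, k < j) {D J : ℕ} {c lam P₀ K : ℝ≥0}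
    (hlam0 : lam ≠ 0) (hlam1 : lam < 1) (hrow : ∀ m ℓ j, ∑ i, ‖Lprod L m ℓ j i‖₊ ≤ c * lam ^ ℓ)
    (hp2 : ∀ n j, ∀ μ ∈ (p n j).support, 2 ≤ μ.sum fun _ e => e)
    (hpD : ∀ n j, (p n j).totalDegree ≤ D) (hpP : ∀ n j, l1Norm (p n j) ≤ P₀) (hK1 : 1 ≤ K)
    (hK : ∀ n (k : Fin d), (k : ℕ) < J → l1Norm (linearAddComp L p n k) ≤ K * lam ^ n)
    (n : ℕ) (j : Fin d) (hj : (j : ℕ) ≤ J) :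
    l1Norm (linearAddComp L p n j) ≤ c * (1 + P₀ * K ^ D * (lam⁻¹ * (1 - lam)⁻¹)) * lam ^ n := by
  have hbind : ∀ m (i : Fin d), (i : ℕ) ≤ j →
      l1Norm (bind₁ (linearAddComp L p m) (p m i)) ≤ P₀ * (K ^ D * (lam ^ m) ^ 2) := by
    intro m i hi
    refine (l1Norm_bind₁_le_mul_sq hK1 (pow_le_one₀ zero_le hlam1.le) _ _ (hp2 m i) (hpD m i)
      fun k hk => hK m k ?_).trans (mul_le_mul_left (hpP m i) _)
    exact (Fin.lt_def.1 (hpvars m i k hk)).trans_le (hi.trans hj)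
  rw [eq_map_Lprod_mulVec_add_sum C linearAddComp_succ n, linearAddComp_zero, Pi.add_apply,
    Finset.sum_apply]
  calc _ ≤ _ + _ := l1Norm_add_le _ _
    _ ≤ c * lam ^ n + ∑ m ∈ range n, c * lam ^ (n - (m + 1)) * (P₀ * (K ^ D * (lam ^ m) ^ 2)) := by
        refine add_le_add ?_ ((l1Norm_sum_le _ _).trans (sum_le_sum fun m _ => ?_))
        · exact (l1Norm_map_C_mulVec_apply_le _ _ _ fun i _ => (l1Norm_X i).le).trans
            (by simpa using hrow 0 n j)
        · exact (l1Norm_map_C_mulVec_apply_le _ _ _ fun i hi => hbind m i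
            (val_le_of_blockTriangular_toDual (blockTriangular_Lprod hL _ _) hi)).trans
              (mul_le_mul_left (hrow _ _ j) _)
    _ = c * lam ^ n + c * P₀ * K ^ D * ∑ m ∈ range n, lam ^ (n - (m + 1)) * (lam ^ m) ^ 2 := by
        rw [mul_sum]
        exact congrArg _ (sum_congr rfl fun _ _ => by ring)
    _ ≤ c * lam ^ n + c * P₀ * K ^ D * (lam⁻¹ * (1 - lam)⁻¹ * lam ^ n) := by
        gcongr
        exact NNReal.sum_range_pow_sub_succ_mul_sq_le hlam0 hlam1 n
    _ = c * (1 + P₀ * K ^ D * (lam⁻¹ * (1 - lam)⁻¹)) * lam ^ n := by ring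

theorem exists_l1Norm_linearAddComp_le (hL : ∀ n, (L n).BlockTriangular toDual)
    (hpvars : ∀ n j, ∀ k ∈ (p n j).vars, k < j) {D : ℕ} {c lam P₀ : ℝ≥0}
    (hlam0 : lam ≠ 0) (hlam1 : lam < 1) (hrow : ∀ m ℓ j, ∑ i, ‖Lprod L m ℓ j i‖₊ ≤ c * lam ^ ℓ)
    (hp2 : ∀ n j, ∀ μ ∈ (p n j).support, 2 ≤ μ.sum fun _ e => e)
    (hpD : ∀ n j, (p n j).totalDegree ≤ D) (hpP : ∀ n j, l1Norm (p n j) ≤ P₀) :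
    ∃ K : ℝ≥0, ∀ n j, l1Norm (linearAddComp L p n j) ≤ K * lam ^ n := by
  have key : ∀ J, ∃ K : ℝ≥0, 1 ≤ K ∧
      ∀ n (k : Fin d), (k : ℕ) < J → l1Norm (linearAddComp L p n k) ≤ K * lam ^ n := by
    intro J
    induction J with
    | zero => exact ⟨1, le_rfl, fun _ _ h => absurd h (Nat.not_lt_zero _)⟩
    | succ J ih =>
      obtain ⟨K, hK1, hK⟩ := ih
      refine ⟨max 1 (c * (1 + P₀ * K ^ D * (lam⁻¹ * (1 - lam)⁻¹))), le_max_left _ _,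
        fun n k hk => ?_⟩
      exact (l1Norm_linearAddComp_le_of_forall_lt hL hpvars hlam0 hlam1 hrow hp2 hpD hpP hK1 hK n k
        (Nat.lt_succ_iff.1 hk)).trans (mul_le_mul_left (le_max_right _ _) _)
  obtain ⟨K, -, hK⟩ := key d
  exact ⟨K, fun n j => hK n j j.isLt⟩

end Dynamics

theorem stmt16_general (d : ℕ) (L : ℕ → Matrix (Fin d) (Fin d) ℂ) (c lam : ℝ)
    (hlam0 : 0 < lam) (hlam1 : lam < 1)
    (hLtri : ∀ n, ∀ i j : Fin d, i < j → L n i j = 0)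
    (hLnorm : ∀ m ℓ : ℕ, opN (Lprod L m ℓ) ≤ c * lam ^ ℓ)
    (p : ℕ → Fin d → MvPolynomial (Fin d) ℂ)
    (hpstrict : ∀ n, ∀ j : Fin d, ∀ m ∈ (p n j).support,
      (∀ i : Fin d, j ≤ i → m i = 0) ∧ 2 ≤ m.sum (fun _ e => e))
    (hpbdd : ∃ (D : ℕ) (M : ℝ), ∀ n, ∀ j : Fin d,
      (p n j).totalDegree ≤ D ∧ ∀ m : Fin d →₀ ℕ, ‖MvPolynomial.coeff m (p n j)‖ ≤ M) :
    ∃ (D : ℕ) (M : ℝ), ∀ n, ∀ j : Fin d,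
      (compSeq (fun n j =>
          (∑ i : Fin d, MvPolynomial.C (L n j i) * MvPolynomial.X i) + p n j) n j).totalDegree ≤ D ∧
      ∀ m : Fin d →₀ ℕ,
        ‖MvPolynomial.coeff m (compSeq (fun n j =>
          (∑ i : Fin d, MvPolynomial.C (L n j i) * MvPolynomial.X i) + p n j) n j)‖
          ≤ M * lam ^ n := by
  obtain ⟨D, M, hp⟩ := hpbdd
  have hL : ∀ n, (L n).BlockTriangular OrderDual.toDual := fun n _ _ h => hLtri n _ _ h
  have hpvars : ∀ n j, ∀ k ∈ (p n j).vars, k < j := fun n j k hk => by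
    obtain ⟨μ, hμ, hk⟩ := (mem_vars_iff_mem_support k).1 hk
    exact not_le.1 fun hjk => Finsupp.mem_support_iff.1 hk ((hpstrict n j μ hμ).1 k hjk)
  lift lam to ℝ≥0 using hlam0.le
  have hrow : ∀ m ℓ j, ∑ i, ‖Lprod L m ℓ j i‖₊ ≤ c.toNNReal * lam ^ ℓ := fun m ℓ j => by
    rw [← NNReal.coe_le_coe]
    push_cast
    exact (sum_norm_apply_le_opN _ j).trans
      ((hLnorm m ℓ).trans (by gcongr; exact Real.le_coe_toNNReal c))
  have hpP : ∀ n j, l1Norm (p n j) ≤ (D + 1) ^ d * M.toNNReal := fun n j => by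
    simpa using l1Norm_le_of_totalDegree_le (hp n j).1 fun μ =>
      NNReal.coe_le_coe.1 (((hp n j).2 μ).trans (Real.le_coe_toNNReal M))
  obtain ⟨E, hE⟩ := exists_totalDegree_linearAddComp_le hL hpvars fun n j => (hp n j).1
  obtain ⟨K, hK⟩ := exists_l1Norm_linearAddComp_le hL hpvars (NNReal.coe_pos.1 hlam0).ne'
    (NNReal.coe_lt_one.1 hlam1) hrow (fun n j μ hμ => (hpstrict n j μ hμ).2)
    (fun n j => (hp n j).1) hpP
  refine ⟨E, K, fun n j => ⟨hE n j, fun m => ?_⟩⟩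
  exact_mod_cast (nnnorm_coeff_le_l1Norm (linearAddComp L p n j) m).trans (hK n j)

theorem stmt16 (d : ℕ) (L : ℕ → Matrix (Fin d) (Fin d) ℂ) (c lam : ℝ)
    (hc : 0 < c) (hlam0 : 0 < lam) (hlam1 : lam < 1)
    (hLtri : ∀ n, ∀ i j : Fin d, i < j → L n i j = 0)
    (hLdiag : ∀ n, ∀ i : Fin d, L n i i ≠ 0)
    (hLnorm : ∀ m ℓ : ℕ, opN (Lprod L m ℓ) ≤ c * lam ^ ℓ)
    (p : ℕ → Fin d → MvPolynomial (Fin d) ℂ)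
    (hpstrict : ∀ n, ∀ j : Fin d, ∀ m ∈ (p n j).support,
      (∀ i : Fin d, j ≤ i → m i = 0) ∧ 2 ≤ m.sum (fun _ e => e))
    (hpbdd : ∃ (D : ℕ) (M : ℝ), ∀ n, ∀ j : Fin d,
      (p n j).totalDegree ≤ D ∧ ∀ m : Fin d →₀ ℕ, ‖MvPolynomial.coeff m (p n j)‖ ≤ M) :
    ∃ (D : ℕ) (M : ℝ), ∀ n, ∀ j : Fin d,
      (compSeq (fun n j =>
          (∑ i : Fin d, MvPolynomial.C (L n j i) * MvPolynomial.X i) + p n j) n j).totalDegree ≤ D ∧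
      ∀ m : Fin d →₀ ℕ,
        ‖MvPolynomial.coeff m (compSeq (fun n j =>
          (∑ i : Fin d, MvPolynomial.C (L n j i) * MvPolynomial.X i) + p n j) n j)‖
          ≤ M * lam ^ n :=
  stmt16_general d L c lam hlam0 hlam1 hLtri hLnorm p hpstrict hpbdd
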